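/- (Optimality of the design proportional to |(p_A − p_B)·y|.) Let 𝒮 be a finite set, let p_A, p_B be probability mass functions on 𝒮, let y : 𝒮 → ℝ, write δ(s) = (p_A(s) − p_B(s))·y(s), and suppose c = Σ_s |δ(s)| > 0. Define the design p*(s) = |δ(s)|/c. Then Σ_{s : p*(s) > 0} δ(s)² / p*(s) = c², and for every probability mass function p_Δ on 𝒮 with p_Δ(s) > 0 whenever δ(s) ≠ 0, one has Σ_{s : p_Δ(s) > 0} δ(s)² / p_Δ(s) ≥ c²; that is, p* minimizes the second moment Σ_{s : p_Δ(s) > 0} δ(s)² / p_Δ(s) over all such designs p_Δ. -/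

import Mathlib

/-!
The lower bound is the Cauchy–Schwarz inequality
`(∑ |δ|)² = (∑ (|δ| / √p) · √p)² ≤ (∑ δ² / p) · ∑ p`, summed over the support of `p`, which
carries all of `∑ |δ|`. Equality holds exactly when `|δ| / √p` is proportional to `√p`, i.e. for
`p = |δ| / c`, and then every term `δ² / p` equals `c · |δ|`.
-/

section

open Finset

variable {ι : Type*} [Fintype ι]

noncomputable def secondMoment (δ p : ι → ℝ) : ℝ :=
  ∑ s ∈ univ.filter (fun s => 0 < p s), δ s ^ 2 / p s

-- Holds also for `x = 0` or `c = 0`, through `a / 0 = 0`.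
lemma sq_div_abs_div (x c : ℝ) : x ^ 2 / (|x| / c) = c * |x| := by
  rcases eq_or_ne x 0 with rfl | hx
  · simp
  · have hx' : |x| ≠ 0 := abs_ne_zero.2 hx
    rw [← sq_abs]
    field_simp

lemma secondMoment_abs_div (δ : ι → ℝ) {c : ℝ} (hc : 0 < c) :
    secondMoment δ (fun s => |δ s| / c) = c * ∑ s, |δ s| := by
  simp only [secondMoment, sq_div_abs_div, mul_sum]
  refine sum_filter_of_ne fun s _ h => div_pos ?_ hc
  exact abs_pos.2 fun h0 => h (by simp [h0])

lemma sq_sum_abs_le_secondMoment_mul_sum (δ : ι → ℝ) {p : ι → ℝ} (hp : ∀ s, 0 ≤ p s)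
    (hsupp : ∀ s, δ s ≠ 0 → 0 < p s) :
    (∑ s, |δ s|) ^ 2 ≤ secondMoment δ p * ∑ s, p s := by
  set T := univ.filter (fun s => 0 < p s)
  have hT : ∀ s ∈ T, 0 < p s := fun s hs => (mem_filter.1 hs).2
  have hδT : ∑ s ∈ T, |δ s| = ∑ s, |δ s| :=
    sum_filter_of_ne fun s _ h => hsupp s fun h0 => h (by simp [h0])
  calc (∑ s, |δ s|) ^ 2 = (∑ s ∈ T, |δ s|) ^ 2 := by rw [hδT]
    _ ≤ (∑ s ∈ T, δ s ^ 2 / p s) * ∑ s ∈ T, p s :=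
      sum_sq_le_sum_mul_sum_of_sq_le_mul T
        (fun s hs => div_nonneg (sq_nonneg _) (hT s hs).le) (fun s hs => (hT s hs).le)
        (fun s hs => by rw [sq_abs, div_mul_cancel₀ _ (hT s hs).ne'])
    _ ≤ secondMoment δ p * ∑ s, p s :=
      mul_le_mul_of_nonneg_left
        (sum_le_sum_of_subset_of_nonneg (filter_subset _ _) fun s _ _ => hp s)
        (sum_nonneg fun s hs => div_nonneg (sq_nonneg _) (hT s hs).le)

end

theorem optimal_design_proportional_to_delta_general
    {𝒮 : Type*} [Fintype 𝒮]
    (pA pB y : 𝒮 → ℝ)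
    (c : ℝ) (hc : c = ∑ s, |(pA s - pB s) * y s|) (hcpos : 0 < c) :
    (∑ s ∈ Finset.univ.filter (fun s => 0 < |(pA s - pB s) * y s| / c),
        ((pA s - pB s) * y s) ^ 2 / (|(pA s - pB s) * y s| / c) = c ^ 2) ∧
      (∀ pΔ : 𝒮 → ℝ, (∀ s, 0 ≤ pΔ s) → (∑ s, pΔ s = 1) →
        (∀ s, (pA s - pB s) * y s ≠ 0 → 0 < pΔ s) →
          c ^ 2 ≤ ∑ s ∈ Finset.univ.filter (fun s => 0 < pΔ s),
            ((pA s - pB s) * y s) ^ 2 / pΔ s) := by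
  set δ : 𝒮 → ℝ := fun s => (pA s - pB s) * y s
  refine ⟨?_, fun pΔ hpΔ hpΔ1 hsupp => ?_⟩
  · change secondMoment δ (fun s => |δ s| / c) = c ^ 2
    rw [secondMoment_abs_div δ hcpos, ← hc, sq]
  · change c ^ 2 ≤ secondMoment δ pΔ
    have h := sq_sum_abs_le_secondMoment_mul_sum δ hpΔ hsupp
    rwa [hpΔ1, mul_one, ← hc] at h

/-- Optimality of the design proportional to `|(p_A − p_B)·y|`: with
`δ(s) = (p_A(s) − p_B(s))·y(s)`, `c = Σ_s |δ(s)| > 0` and `p*(s) = |δ(s)|/c`, the second moment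
`Σ_{s : p*(s) > 0} δ(s)²/p*(s)` equals `c²`, and every design `p_Δ` with `p_Δ(s) > 0` whenever
`δ(s) ≠ 0` has second moment `Σ_{s : p_Δ(s) > 0} δ(s)²/p_Δ(s) ≥ c²`. -/
theorem optimal_design_proportional_to_delta
    {𝒮 : Type*} [Fintype 𝒮]
    (pA pB y : 𝒮 → ℝ)
    (hA0 : ∀ s, 0 ≤ pA s) (hA1 : ∑ s, pA s = 1)
    (hB0 : ∀ s, 0 ≤ pB s) (hB1 : ∑ s, pB s = 1)
    (c : ℝ) (hc : c = ∑ s, |(pA s - pB s) * y s|) (hcpos : 0 < c) :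
    (∑ s ∈ Finset.univ.filter (fun s => 0 < |(pA s - pB s) * y s| / c),
        ((pA s - pB s) * y s) ^ 2 / (|(pA s - pB s) * y s| / c) = c ^ 2) ∧
      (∀ pΔ : 𝒮 → ℝ, (∀ s, 0 ≤ pΔ s) → (∑ s, pΔ s = 1) →
        (∀ s, (pA s - pB s) * y s ≠ 0 → 0 < pΔ s) →
          c ^ 2 ≤ ∑ s ∈ Finset.univ.filter (fun s => 0 < pΔ s),
            ((pA s - pB s) * y s) ^ 2 / pΔ s) :=
  optimal_design_proportional_to_delta_general pA pB y c hc hcpos
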